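/- arXiv:1502.05568 — 2 statements merged into one kernel-verified Lean document; each statement's English description precedes it below -/
import Mathlib

section
/- Let λ > 1 and let M be a 3×3 real matrix whose entries Mᵢⱼ satisfy: |M₁₁| − |M₁₂| − |M₁₃| ≥ λ, |M₂₂| − |M₂₁| − |M₂₃| ≥ λ, and each of |M₁₂|, |M₁₃|, |M₂₁|, |M₂₃|, |M₃₁|, |M₃₂|, |M₃₃| is at most λ/8. Let u, v ∈ ℝ with u² + v² ≤ 1, set t₁ = M·(1, 0, u) and t₂ = M·(0, 1, v) in ℝ³, and let w = t₁ × t₂ be their cross product. Then |w₃| ≥ |w₁| + |w₂|, and consequently |w₃| ≥ (√2/2)·√(w₁² + w₂² + w₃²); in particular the angle between the normal vector w of the image surface and the z-axis is at most 45 degrees. -/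
open Real

private lemma key_scalar_ineq (lam X Y : ℝ) (hlam : 0 < lam) (hX : X ≥ lam) (hY : Y ≥ lam) :
    X * Y - lam/4 * (lam/4) ≥
      (lam/4 * (lam/4) + lam/4 * Y) + (lam/4 * (lam/4) + X * (lam/4)) := by
  have p : 0 ≤ (X - lam) * (Y - lam) := mul_nonneg (sub_nonneg.mpr hX) (sub_nonneg.mpr hY)
  have q0 : 0 ≤ lam * lam := mul_nonneg hlam.le hlam.le
  have q1 : 0 ≤ lam * (X - lam) := mul_nonneg hlam.le (sub_nonneg.mpr hX)
  have q2 : 0 ≤ lam * (Y - lam) := mul_nonneg hlam.le (sub_nonneg.mpr hY)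
  have p' : lam * X + lam * Y - lam * lam ≤ X * Y := by ring_nf at p ⊢; linarith
  have q1' : lam * lam ≤ lam * X := by ring_nf at q1 ⊢; linarith
  have q2' : lam * lam ≤ lam * Y := by ring_nf at q2 ⊢; linarith
  have e : lam/4 * (lam/4) = lam * lam / 16 := by ring
  have e2 : lam/4 * Y = lam * Y / 4 := by ring
  have e3 : X * (lam/4) = lam * X / 4 := by ring
  rw [e, e2, e3]
  linarith

set_option maxHeartbeats 1000000 in
/-- If the Jacobian `M` satisfies the hyperbolicity conditions (A1)–(A2) and the
surface normal makes an angle ≤ 45° with the z-axis (`u² + v² ≤ 1` with `u = αₓ`,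
`v = αᵧ`), then the normal vector `w = t₁ × t₂` of the image surface satisfies
`|w₃| ≥ |w₁| + |w₂|`, hence makes an angle ≤ 45° with the z-axis. -/
theorem image_normal_angle_le_45
    (lam : ℝ) (hlam : lam > 1) (M : Matrix (Fin 3) (Fin 3) ℝ)
    (hA1x : |M 0 0| - |M 0 1| - |M 0 2| ≥ lam)
    (hA1y : |M 1 1| - |M 1 0| - |M 1 2| ≥ lam)
    (hA2_01 : |M 0 1| ≤ lam / 8) (hA2_02 : |M 0 2| ≤ lam / 8)
    (hA2_10 : |M 1 0| ≤ lam / 8) (hA2_12 : |M 1 2| ≤ lam / 8)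
    (hA2_20 : |M 2 0| ≤ lam / 8) (hA2_21 : |M 2 1| ≤ lam / 8)
    (hA2_22 : |M 2 2| ≤ lam / 8)
    (u v : ℝ) (huv : u ^ 2 + v ^ 2 ≤ 1)
    (t₁ t₂ w : Fin 3 → ℝ)
    (ht₁ : t₁ = M.mulVec ![1, 0, u])
    (ht₂ : t₂ = M.mulVec ![0, 1, v])
    (hw : w = ![t₁ 1 * t₂ 2 - t₁ 2 * t₂ 1,
                t₁ 2 * t₂ 0 - t₁ 0 * t₂ 2,
                t₁ 0 * t₂ 1 - t₁ 1 * t₂ 0]) :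
    |w 2| ≥ |w 0| + |w 1| ∧
    |w 2| ≥ (Real.sqrt 2 / 2) * Real.sqrt ((w 0) ^ 2 + (w 1) ^ 2 + (w 2) ^ 2) := by
  have hu : |u| ≤ 1 := by
    rw [← sq_le_one_iff_abs_le_one]; have := sq_nonneg v; linarith
  have hv : |v| ≤ 1 := by
    rw [← sq_le_one_iff_abs_le_one]; have := sq_nonneg u; linarith
  have e10 : t₁ 0 = M 0 0 + M 0 2 * u := by
    subst ht₁; simp [Matrix.mulVec, dotProduct, Fin.sum_univ_three]
  have e11 : t₁ 1 = M 1 0 + M 1 2 * u := by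
    subst ht₁; simp [Matrix.mulVec, dotProduct, Fin.sum_univ_three]
  have e12 : t₁ 2 = M 2 0 + M 2 2 * u := by
    subst ht₁; simp [Matrix.mulVec, dotProduct, Fin.sum_univ_three]
  have e20 : t₂ 0 = M 0 1 + M 0 2 * v := by
    subst ht₂; simp [Matrix.mulVec, dotProduct, Fin.sum_univ_three]
  have e21 : t₂ 1 = M 1 1 + M 1 2 * v := by
    subst ht₂; simp [Matrix.mulVec, dotProduct, Fin.sum_univ_three]
  have e22 : t₂ 2 = M 2 1 + M 2 2 * v := by
    subst ht₂; simp [Matrix.mulVec, dotProduct, Fin.sum_univ_three]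
  have w0 : w 0 = t₁ 1 * t₂ 2 - t₁ 2 * t₂ 1 := by rw [hw]; rfl
  have w1 : w 1 = t₁ 2 * t₂ 0 - t₁ 0 * t₂ 2 := by rw [hw]; rfl
  have w2 : w 2 = t₁ 0 * t₂ 1 - t₁ 1 * t₂ 0 := by rw [hw]; rfl
  -- bounds on t components
  have hcu : |M 0 2 * u| ≤ lam / 8 := by
    rw [abs_mul]
    exact (mul_le_mul hA2_02 hu (abs_nonneg _) (by linarith)).trans (by linarith)
  have hfv : |M 1 2 * v| ≤ lam / 8 := by
    rw [abs_mul]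
    exact (mul_le_mul hA2_12 hv (abs_nonneg _) (by linarith)).trans (by linarith)
  have hfu : |M 1 2 * u| ≤ lam / 8 := by
    rw [abs_mul]
    exact (mul_le_mul hA2_12 hu (abs_nonneg _) (by linarith)).trans (by linarith)
  have hcv : |M 0 2 * v| ≤ lam / 8 := by
    rw [abs_mul]
    exact (mul_le_mul hA2_02 hv (abs_nonneg _) (by linarith)).trans (by linarith)
  have hiu : |M 2 2 * u| ≤ lam / 8 := by
    rw [abs_mul]
    exact (mul_le_mul hA2_22 hu (abs_nonneg _) (by linarith)).trans (by linarith)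
  have hiv : |M 2 2 * v| ≤ lam / 8 := by
    rw [abs_mul]
    exact (mul_le_mul hA2_22 hv (abs_nonneg _) (by linarith)).trans (by linarith)
  have hcu' : |M 0 2 * u| ≤ |M 0 2| := by
    rw [abs_mul]; exact mul_le_of_le_one_right (abs_nonneg _) hu
  have hfv' : |M 1 2 * v| ≤ |M 1 2| := by
    rw [abs_mul]; exact mul_le_of_le_one_right (abs_nonneg _) hv
  have hX : |t₁ 0| ≥ lam := by
    have key := abs_sub_abs_le_abs_sub (M 0 0) (-(M 0 2 * u))
    simp only [abs_neg, sub_neg_eq_add] at key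
    have := abs_nonneg (M 0 1)
    rw [e10]; linarith
  have hY : |t₂ 1| ≥ lam := by
    have key := abs_sub_abs_le_abs_sub (M 1 1) (-(M 1 2 * v))
    simp only [abs_neg, sub_neg_eq_add] at key
    have := abs_nonneg (M 1 0)
    rw [e21]; linarith
  have ht11 : |t₁ 1| ≤ lam / 4 := by
    rw [e11]; calc |M 1 0 + M 1 2 * u| ≤ |M 1 0| + |M 1 2 * u| := abs_add_le _ _
      _ ≤ lam / 4 := by linarith
  have ht12 : |t₁ 2| ≤ lam / 4 := by
    rw [e12]; calc |M 2 0 + M 2 2 * u| ≤ |M 2 0| + |M 2 2 * u| := abs_add_le _ _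
      _ ≤ lam / 4 := by linarith
  have ht20 : |t₂ 0| ≤ lam / 4 := by
    rw [e20]; calc |M 0 1 + M 0 2 * v| ≤ |M 0 1| + |M 0 2 * v| := abs_add_le _ _
      _ ≤ lam / 4 := by linarith
  have ht22 : |t₂ 2| ≤ lam / 4 := by
    rw [e22]; calc |M 2 1 + M 2 2 * v| ≤ |M 2 1| + |M 2 2 * v| := abs_add_le _ _
      _ ≤ lam / 4 := by linarith
  have hw0 : |w 0| ≤ |t₁ 1| * |t₂ 2| + |t₁ 2| * |t₂ 1| := by
    rw [w0]
    calc |t₁ 1 * t₂ 2 - t₁ 2 * t₂ 1| ≤ |t₁ 1 * t₂ 2| + |t₁ 2 * t₂ 1| := abs_sub _ _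
      _ = |t₁ 1| * |t₂ 2| + |t₁ 2| * |t₂ 1| := by rw [abs_mul, abs_mul]
  have hw1 : |w 1| ≤ |t₁ 2| * |t₂ 0| + |t₁ 0| * |t₂ 2| := by
    rw [w1]
    calc |t₁ 2 * t₂ 0 - t₁ 0 * t₂ 2| ≤ |t₁ 2 * t₂ 0| + |t₁ 0 * t₂ 2| := abs_sub _ _
      _ = |t₁ 2| * |t₂ 0| + |t₁ 0| * |t₂ 2| := by rw [abs_mul, abs_mul]
  have hw2 : |w 2| ≥ |t₁ 0| * |t₂ 1| - |t₁ 1| * |t₂ 0| := by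
    rw [w2]
    have key := abs_sub_abs_le_abs_sub (t₁ 0 * t₂ 1) (t₁ 1 * t₂ 0)
    rw [abs_mul, abs_mul] at key
    linarith
  have hlam0 : (0:ℝ) < lam := by linarith
  have k1 : |t₁ 1| * |t₂ 0| ≤ lam/4 * (lam/4) :=
    mul_le_mul ht11 ht20 (abs_nonneg _) (by linarith)
  have k2 : |t₁ 1| * |t₂ 2| ≤ lam/4 * (lam/4) :=
    mul_le_mul ht11 ht22 (abs_nonneg _) (by linarith)
  have k3 : |t₁ 2| * |t₂ 0| ≤ lam/4 * (lam/4) :=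
    mul_le_mul ht12 ht20 (abs_nonneg _) (by linarith)
  have k4 : |t₁ 2| * |t₂ 1| ≤ lam/4 * |t₂ 1| :=
    mul_le_mul_of_nonneg_right ht12 (abs_nonneg _)
  have k5 : |t₁ 0| * |t₂ 2| ≤ |t₁ 0| * (lam/4) :=
    mul_le_mul_of_nonneg_left ht22 (abs_nonneg _)
  have hfinal := key_scalar_ineq lam (|t₁ 0|) (|t₂ 1|) hlam0 hX hY
  have hmain : |w 2| ≥ |w 0| + |w 1| := by
    linarith [hw0, hw1, hw2, k1, k2, k3, k4, k5, hfinal]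
  refine ⟨hmain, ?_⟩
  have hS : (w 0) ^ 2 + (w 1) ^ 2 + (w 2) ^ 2 ≤ 2 * (w 2) ^ 2 := by
    have h1 : (w 0)^2 + (w 1)^2 ≤ (|w 0| + |w 1|)^2 := by
      rw [add_sq, sq_abs, sq_abs]
      have := mul_nonneg (abs_nonneg (w 0)) (abs_nonneg (w 1))
      linarith
    have h2 : (|w 0| + |w 1|)^2 ≤ (w 2)^2 := by
      rw [← sq_abs (w 2)]
      exact pow_le_pow_left₀ (by positivity) hmain 2
    linarith
  have h1 : Real.sqrt ((w 0) ^ 2 + (w 1) ^ 2 + (w 2) ^ 2) ≤ Real.sqrt 2 * |w 2| := by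
    rw [show Real.sqrt 2 * |w 2| = Real.sqrt (2 * (w 2)^2) by
      rw [Real.sqrt_mul (by norm_num), Real.sqrt_sq_eq_abs]]
    exact Real.sqrt_le_sqrt hS
  have h2 : Real.sqrt 2 / 2 * (Real.sqrt 2 * |w 2|) = |w 2| := by
    have hs : Real.sqrt 2 * Real.sqrt 2 = 2 := Real.mul_self_sqrt (by norm_num)
    calc Real.sqrt 2 / 2 * (Real.sqrt 2 * |w 2|)
        = (Real.sqrt 2 * Real.sqrt 2) / 2 * |w 2| := by ring
      _ = |w 2| := by rw [hs]; ring
  calc Real.sqrt 2 / 2 * Real.sqrt ((w 0)^2 + (w 1)^2 + (w 2)^2)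
      ≤ Real.sqrt 2 / 2 * (Real.sqrt 2 * |w 2|) := by
        apply mul_le_mul_of_nonneg_left h1
        positivity
    _ = |w 2| := h2
end

section
/- Let U ⊆ ℝ² be a convex set, λ > 0, and let T = (T₁, T₂) : ℝ² → ℝ² be twice differentiable on U with ‖DT(w)‖ ≤ K₁ and ‖D²T(w)‖ ≤ K₂ for all w ∈ U, and suppose that for all w ∈ U the partial derivatives satisfy |∂ₓT₁(w)| − |∂ᵧT₁(w)| ≥ λ and |∂ᵧT₂(w)| − |∂ₓT₂(w)| ≥ λ. Then |det DT(w)| ≥ λ² for all w ∈ U, and for all w₁, w₂ ∈ U, |log |det DT(w₁)| − log |det DT(w₂)|| ≤ (4·K₁·K₂/λ²)·‖w₁ − w₂‖. -/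
open Real

lemma det_ge_aux (a b c d lam : ℝ) (hlam : 0 < lam)
    (h1 : |a| - |b| ≥ lam) (h2 : |d| - |c| ≥ lam) : |a*d - b*c| ≥ lam^2 := by
  have h := abs_sub_abs_le_abs_sub (a*d) (b*c)
  rw [abs_mul, abs_mul] at h
  nlinarith [abs_nonneg b, abs_nonneg c]

lemma log_sub_le_aux (x y m : ℝ) (hm : 0 < m) (hx : m ≤ x) (hy : m ≤ y) :
    Real.log x - Real.log y ≤ |x - y| / m := by
  have hx0 : 0 < x := hm.trans_le hx
  have hy0 : 0 < y := hm.trans_le hy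
  rcases le_or_gt y x with hxy | hxy
  · have h := Real.log_le_sub_one_of_pos (div_pos hx0 hy0)
    rw [Real.log_div hx0.ne' hy0.ne'] at h
    have h2 : x / y - 1 = (x - y) / y := by field_simp
    rw [h2] at h
    calc Real.log x - Real.log y ≤ (x - y) / y := h
      _ ≤ (x - y) / m := by gcongr
      _ = |x - y| / m := by rw [abs_of_nonneg (sub_nonneg.2 hxy)]
  · have : Real.log x ≤ Real.log y := Real.log_le_log hx0 hxy.le
    have h0 : Real.log x - Real.log y ≤ 0 := sub_nonpos.2 this
    exact h0.trans (by positivity)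

lemma entry_abs_le (A : (ℝ × ℝ) →L[ℝ] (ℝ × ℝ)) (v : ℝ × ℝ) (hv : ‖v‖ = 1) :
    |(A v).1| ≤ ‖A‖ ∧ |(A v).2| ≤ ‖A‖ := by
  have h : ‖A v‖ ≤ ‖A‖ := by
    calc ‖A v‖ ≤ ‖A‖ * ‖v‖ := A.le_opNorm v
      _ = ‖A‖ := by rw [hv, mul_one]
  exact ⟨(norm_fst_le (A v)).trans h, (norm_snd_le (A v)).trans h⟩

/-- Log-Lipschitz (bounded distortion) estimate for the Jacobian determinant of the
hyperbolic projected map `T = (T₁, T₂)`: under the hyperbolicity conditions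
`|∂ₓT₁| - |∂ᵧT₁| ≥ λ` and `|∂ᵧT₂| - |∂ₓT₂| ≥ λ` and the bounds `‖DT‖ ≤ K₁`,
`‖D²T‖ ≤ K₂` on a convex set `U`, the determinant
`det DT = ∂ₓT₁·∂ᵧT₂ - ∂ᵧT₁·∂ₓT₂` satisfies `|det DT| ≥ λ²` on `U` and
`|log |det DT(w₁)| - log |det DT(w₂)|| ≤ (4 K₁ K₂ / λ²) ‖w₁ - w₂‖`. -/
theorem log_det_jacobian_lipschitz
    (U : Set (ℝ × ℝ)) (hU : Convex ℝ U) (lam : ℝ) (hlam : lam > 0)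
    (T : ℝ × ℝ → ℝ × ℝ) (K₁ K₂ : ℝ)
    (hdiff : ∀ w ∈ U, DifferentiableAt ℝ T w)
    (hdiff2 : ∀ w ∈ U, DifferentiableAt ℝ (fderiv ℝ T) w)
    (hK₁ : ∀ w ∈ U, ‖fderiv ℝ T w‖ ≤ K₁)
    (hK₂ : ∀ w ∈ U, ‖fderiv ℝ (fderiv ℝ T) w‖ ≤ K₂)
    (hhyp1 : ∀ w ∈ U, |(fderiv ℝ T w (1, 0)).1| - |(fderiv ℝ T w (0, 1)).1| ≥ lam)
    (hhyp2 : ∀ w ∈ U, |(fderiv ℝ T w (0, 1)).2| - |(fderiv ℝ T w (1, 0)).2| ≥ lam)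
    (detDT : (ℝ × ℝ) → ℝ)
    (hdet : ∀ w, detDT w = (fderiv ℝ T w (1, 0)).1 * (fderiv ℝ T w (0, 1)).2 -
      (fderiv ℝ T w (0, 1)).1 * (fderiv ℝ T w (1, 0)).2) :
    (∀ w ∈ U, |detDT w| ≥ lam ^ 2) ∧
    (∀ w₁ ∈ U, ∀ w₂ ∈ U,
      abs (Real.log |detDT w₁| - Real.log |detDT w₂|) ≤
        (4 * K₁ * K₂ / lam ^ 2) * ‖w₁ - w₂‖) := by
  have he1 : ‖((1 : ℝ), (0 : ℝ))‖ = 1 := by simp [Prod.norm_def]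
  have he2 : ‖((0 : ℝ), (1 : ℝ))‖ = 1 := by simp [Prod.norm_def]
  have hdet_ge : ∀ w ∈ U, |detDT w| ≥ lam ^ 2 := by
    intro w hw
    rw [hdet w]
    exact det_ge_aux _ _ _ _ _ hlam (hhyp1 w hw) (hhyp2 w hw)
  refine ⟨hdet_ge, ?_⟩
  intro w₁ hw₁ w₂ hw₂
  set A := fderiv ℝ T w₁ with hA
  set B := fderiv ℝ T w₂ with hB
  have hK₁0 : 0 ≤ K₁ := (norm_nonneg A).trans (hK₁ w₁ hw₁)
  -- Lipschitz estimate for the derivative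
  have hAB : ‖A - B‖ ≤ K₂ * ‖w₁ - w₂‖ := by
    have := hU.norm_image_sub_le_of_norm_fderiv_le hdiff2 hK₂ hw₂ hw₁
    simpa using this
  -- entry bounds
  obtain ⟨ha₁, hc₁⟩ := entry_abs_le A (1,0) he1
  obtain ⟨hb₁, hd₁⟩ := entry_abs_le A (0,1) he2
  obtain ⟨ha₂, hc₂⟩ := entry_abs_le B (1,0) he1
  obtain ⟨hb₂, hd₂⟩ := entry_abs_le B (0,1) he2
  obtain ⟨hda, hdc⟩ := entry_abs_le (A - B) (1,0) he1
  obtain ⟨hdb, hdd⟩ := entry_abs_le (A - B) (0,1) he2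
  rw [ContinuousLinearMap.sub_apply] at hda hdc hdb hdd
  simp only [Prod.fst_sub, Prod.snd_sub] at hda hdc hdb hdd
  have hAK := hK₁ w₁ hw₁
  have hBK := hK₁ w₂ hw₂
  -- determinant difference bound
  have hdetdiff : |detDT w₁ - detDT w₂| ≤ 4 * K₁ * K₂ * ‖w₁ - w₂‖ := by
    rw [hdet w₁, hdet w₂]
    set a₁ := (A (1,0)).1; set b₁ := (A (0,1)).1; set c₁ := (A (1,0)).2; set d₁ := (A (0,1)).2
    set a₂ := (B (1,0)).1; set b₂ := (B (0,1)).1; set c₂ := (B (1,0)).2; set d₂ := (B (0,1)).2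
    have key : a₁ * d₁ - b₁ * c₁ - (a₂ * d₂ - b₂ * c₂) =
        a₁ * (d₁ - d₂) + (a₁ - a₂) * d₂ - b₁ * (c₁ - c₂) - (b₁ - b₂) * c₂ := by ring
    rw [key]
    have ε := K₂ * ‖w₁ - w₂‖
    have habs : |a₁ * (d₁ - d₂) + (a₁ - a₂) * d₂ - b₁ * (c₁ - c₂) - (b₁ - b₂) * c₂| ≤
        |a₁| * |d₁ - d₂| + |a₁ - a₂| * |d₂| + |b₁| * |c₁ - c₂| + |b₁ - b₂| * |c₂| := by
      calc _ ≤ |a₁ * (d₁ - d₂) + (a₁ - a₂) * d₂ - b₁ * (c₁ - c₂)| + |(b₁ - b₂) * c₂| :=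
            abs_sub _ _
        _ ≤ |a₁ * (d₁ - d₂) + (a₁ - a₂) * d₂| + |b₁ * (c₁ - c₂)| + |(b₁ - b₂) * c₂| := by
            gcongr; exact abs_sub _ _
        _ ≤ |a₁ * (d₁ - d₂)| + |(a₁ - a₂) * d₂| + |b₁ * (c₁ - c₂)| + |(b₁ - b₂) * c₂| := by
            gcongr; exact abs_add_le _ _
        _ = _ := by rw [abs_mul, abs_mul, abs_mul, abs_mul]
    have hABn : ‖A - B‖ ≤ K₂ * ‖w₁ - w₂‖ := hAB
    have t1 : |a₁| * |d₁ - d₂| ≤ K₁ * (K₂ * ‖w₁ - w₂‖) :=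
      mul_le_mul (ha₁.trans hAK) (hdd.trans hABn) (abs_nonneg _) hK₁0
    have t2 : |a₁ - a₂| * |d₂| ≤ (K₂ * ‖w₁ - w₂‖) * K₁ :=
      mul_le_mul (hda.trans hABn) (hd₂.trans hBK) (abs_nonneg _) ((norm_nonneg _).trans hABn)
    have t3 : |b₁| * |c₁ - c₂| ≤ K₁ * (K₂ * ‖w₁ - w₂‖) :=
      mul_le_mul (hb₁.trans hAK) (hdc.trans hABn) (abs_nonneg _) hK₁0
    have t4 : |b₁ - b₂| * |c₂| ≤ (K₂ * ‖w₁ - w₂‖) * K₁ :=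
      mul_le_mul (hdb.trans hABn) (hc₂.trans hBK) (abs_nonneg _) ((norm_nonneg _).trans hABn)
    nlinarith [habs]
  -- log estimate
  have hlam2 : (0:ℝ) < lam ^ 2 := by positivity
  have h1 := hdet_ge w₁ hw₁
  have h2 := hdet_ge w₂ hw₂
  have hlog1 := log_sub_le_aux |detDT w₁| |detDT w₂| (lam ^ 2) hlam2 h1 h2
  have hlog2 := log_sub_le_aux |detDT w₂| |detDT w₁| (lam ^ 2) hlam2 h2 h1
  have habsabs : abs (|detDT w₁| - |detDT w₂|) ≤ |detDT w₁ - detDT w₂| :=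
    abs_abs_sub_abs_le_abs_sub _ _
  have hmain : abs (Real.log |detDT w₁| - Real.log |detDT w₂|) ≤
      abs (|detDT w₁| - |detDT w₂|) / lam ^ 2 := by
    rw [abs_sub_le_iff]
    refine ⟨hlog1, ?_⟩
    rw [abs_sub_comm] at hlog2
    exact hlog2
  calc abs (Real.log |detDT w₁| - Real.log |detDT w₂|)
      ≤ abs (|detDT w₁| - |detDT w₂|) / lam ^ 2 := hmain
    _ ≤ |detDT w₁ - detDT w₂| / lam ^ 2 := by gcongr
    _ ≤ (4 * K₁ * K₂ * ‖w₁ - w₂‖) / lam ^ 2 := by gcongr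
    _ = (4 * K₁ * K₂ / lam ^ 2) * ‖w₁ - w₂‖ := by ring
end
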